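/- If {x_n} is a log-convex sequence of nonnegative real numbers, then the Stirling transform of the second kind z_n = ∑_{k=0}^{n} S(n,k) x_k is log-convex, where S(n,k) denotes the Stirling numbers of the second kind. -/

import Mathlib

def LogConvex (a : ℕ → ℝ) : Prop := ∀ n : ℕ, a n * a (n + 2) ≥ a (n + 1) ^ 2

/-- Stirling numbers of the second kind. -/
def stirling2 : ℕ → ℕ → ℕ
  | 0, 0 => 1
  | 0, _ + 1 => 0
  | _ + 1, 0 => 0
  | n + 1, k + 1 => (k + 1) * stirling2 n (k + 1) + stirling2 n k

/-!
The recurrence `S(n+1,k+1) = ∑ⱼ C(n,j) S(j,k)` writes the Stirling transform of `x` at `n + 1` as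
the binomial transform `∑ⱼ C(n,j) yⱼ` of the Stirling transform `y` of the shifted sequence
`k ↦ x (k + 1)`, which is again nonnegative and log-convex. By Pascal's rule, log-convexity of a
binomial transform at `m` reduces to `B² ≤ AC`, where `A, B, C` are the `m`-th binomial transforms
of `y` and of its shifts by one and two; this is Cauchy–Schwarz as soon as `y` is log-convex up to
index `m + 2`. Hence strong induction on `n`, simultaneously for all nonnegative log-convex
sequences.
-/

open Finset

theorem stirling2_eq_stirlingSecond : ∀ n k, stirling2 n k = Nat.stirlingSecond n k
  | 0, 0 | 0, _ + 1 | _ + 1, 0 => rfl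
  | n + 1, k + 1 => by
    rw [stirling2, Nat.stirlingSecond_succ_succ, stirling2_eq_stirlingSecond n (k + 1),
      stirling2_eq_stirlingSecond n k]

section

variable {R : Type*} [CommSemiring R]

def binomialTransform (y : ℕ → R) (m : ℕ) : R :=
  ∑ j ∈ range (m + 1), (m.choose j : R) * y j

theorem binomialTransform_succ (y : ℕ → R) (m : ℕ) :
    binomialTransform y (m + 1) =
      binomialTransform y m + binomialTransform (fun j => y (j + 1)) m := by
  have hlow : ∑ j ∈ range (m + 1), (m.choose (j + 1) : R) * y (j + 1) + y 0 =
      ∑ j ∈ range (m + 1), (m.choose j : R) * y j := by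
    rw [sum_range_succ (fun j => (m.choose (j + 1) : R) * y (j + 1)), Nat.choose_succ_self,
      Nat.cast_zero, zero_mul, add_zero, sum_range_succ' _ m, Nat.choose_zero_right, Nat.cast_one,
      one_mul]
  simp only [binomialTransform, sum_range_succ' _ (m + 1), Nat.choose_succ_succ', Nat.cast_add,
    add_mul, sum_add_distrib, Nat.choose_zero_right, Nat.cast_one, one_mul]
  rw [← hlow]
  ring

theorem Nat.stirlingSecond_succ_succ_eq_binomialTransform (n k : ℕ) :
    Nat.stirlingSecond (n + 1) (k + 1) = binomialTransform (Nat.stirlingSecond · k) n := by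
  induction n generalizing k with
  | zero => cases k <;> simp [binomialTransform, Nat.stirlingSecond_succ_succ]
  | succ n ih =>
    cases k with
    | zero => simp [binomialTransform, Nat.stirlingSecond_one_right, sum_range_succ']
    | succ k =>
      rw [binomialTransform_succ, Nat.stirlingSecond_succ_succ, ih, ih]
      simp only [binomialTransform, Nat.stirlingSecond_succ_succ, Nat.cast_id, mul_add,
        sum_add_distrib, mul_left_comm _ (k + 1), ← mul_sum]
      ring

def stirlingTransform (x : ℕ → R) (n : ℕ) : R :=
  ∑ k ∈ range (n + 1), (n.stirlingSecond k : R) * x k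

theorem stirlingTransform_eq_sum_of_le (x : ℕ → R) {n N : ℕ} (h : n ≤ N) :
    stirlingTransform x n = ∑ k ∈ range (N + 1), (n.stirlingSecond k : R) * x k := by
  refine sum_subset (range_subset_range.2 (by omega)) fun k _ hk => ?_
  rw [Nat.stirlingSecond_eq_zero_of_lt (by simpa using hk), Nat.cast_zero, zero_mul]

theorem stirlingTransform_succ (x : ℕ → R) (n : ℕ) :
    stirlingTransform x (n + 1) = binomialTransform (stirlingTransform fun k => x (k + 1)) n := by
  rw [stirlingTransform, sum_range_succ']
  simp only [Nat.stirlingSecond_succ_succ_eq_binomialTransform, binomialTransform, Nat.cast_sum,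
    Nat.cast_mul, Nat.cast_id, Nat.stirlingSecond_succ_zero, Nat.cast_zero, zero_mul, add_zero,
    sum_mul]
  rw [sum_comm]
  refine sum_congr rfl fun j hj => ?_
  rw [stirlingTransform_eq_sum_of_le _ (Nat.le_of_lt_succ (mem_range.1 hj)), mul_sum]
  exact sum_congr rfl fun k _ => by ring

end

section

variable {R : Type*} [CommRing R] [LinearOrder R] [IsStrictOrderedRing R]

theorem stirlingTransform_nonneg {x : ℕ → R} (hx0 : ∀ k, 0 ≤ x k) (n : ℕ) :
    0 ≤ stirlingTransform x n :=
  sum_nonneg fun k _ => mul_nonneg (Nat.cast_nonneg _) (hx0 k)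

theorem binomialTransform_shift_sq_le {y : ℕ → R} (hy0 : ∀ j, 0 ≤ y j) {m : ℕ}
    (hy : ∀ j ≤ m, y (j + 1) ^ 2 ≤ y j * y (j + 2)) :
    binomialTransform (fun j => y (j + 1)) m ^ 2 ≤
      binomialTransform y m * binomialTransform (fun j => y (j + 2)) m := by
  refine sum_sq_le_sum_mul_sum_of_sq_le_mul _ (fun j _ => by have := hy0 j; positivity)
    (fun j _ => by have := hy0 (j + 2); positivity) fun j hj => ?_
  rw [mul_pow, mul_mul_mul_comm, ← sq]
  exact mul_le_mul_of_nonneg_left (hy j (Nat.le_of_lt_succ (mem_range.1 hj))) (sq_nonneg _)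

theorem binomialTransform_sq_le {y : ℕ → R} (hy0 : ∀ j, 0 ≤ y j) {m : ℕ}
    (hy : ∀ j ≤ m, y (j + 1) ^ 2 ≤ y j * y (j + 2)) :
    binomialTransform y (m + 1) ^ 2 ≤ binomialTransform y m * binomialTransform y (m + 2) := by
  have hB := binomialTransform_shift_sq_le hy0 hy
  rw [binomialTransform_succ y (m + 1), binomialTransform_succ y, binomialTransform_succ]
  linarith

end

theorem logConvex_stirlingTransform {x : ℕ → ℝ} (hx0 : ∀ k, 0 ≤ x k) (hx : LogConvex x) :
    LogConvex (stirlingTransform x) := by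
  intro n
  induction n using Nat.strong_induction_on generalizing x with
  | _ n ih =>
    cases n with
    | zero =>
      have hT : stirlingTransform x 0 = x 0 ∧ stirlingTransform x 1 = x 1 ∧
          stirlingTransform x 2 = x 1 + x 2 := by
        simp [stirlingTransform, sum_range_succ, Nat.stirlingSecond_succ_succ]
      rw [hT.1, hT.2.1, hT.2.2]
      linarith [hx 0, mul_nonneg (hx0 0) (hx0 1)]
    | succ m =>
      simp only [stirlingTransform_succ]
      exact binomialTransform_sq_le (stirlingTransform_nonneg fun k => hx0 (k + 1))
        fun j hj => ih j (by omega) (fun k => hx0 (k + 1)) fun k => hx (k + 1)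

theorem logConvex_stirling2_transform (x : ℕ → ℝ)
    (hx0 : ∀ n, 0 ≤ x n) (hx : LogConvex x) :
    LogConvex (fun n => ∑ k ∈ Finset.range (n + 1), (stirling2 n k : ℝ) * x k) := by
  simp only [stirling2_eq_stirlingSecond]
  exact logConvex_stirlingTransform hx0 hx
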